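/- Let G be a graph of order n ≥ 2 that is not edgeless, having a nonempty set I of isolated vertices, and let G' be the subgraph induced by V(G) \ I. Then SEC(G) ≥ δ(G') + 2. -/

import Mathlib

/-!
Let `v` be a vertex of minimum degree `δ` among the non-isolated vertices and `P = N[v]` its
closed neighbourhood. The partition of `V` into `V \ P` and the `δ + 1` singletons of `P` is a
secure coalition partition. An isolated vertex lies in `V \ P`, so no singleton dominates, and
`V \ P` misses `v`. On the other hand, if `B` is a set of at most `δ` non-isolated vertices,
each `b ∈ B` has more neighbours than `B \ {b}` can hold, hence a neighbour `x ∉ B`, and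
exchanging `b` for `x` yields another such set; so the complement of `B` is secure dominating.
This applies to `(V \ P) ∪ {p} = V \ (P \ {p})` for every `p ∈ P`.
-/

namespace SecCoal

/-- `D` is a dominating set of `G`. -/
def IsDominating {V : Type*} (G : SimpleGraph V) (D : Set V) : Prop :=
  ∀ v ∉ D, ∃ u ∈ D, G.Adj u v

/-- `S` is a secure dominating set of `G`. -/
def IsSecureDominating {V : Type*} (G : SimpleGraph V) (S : Set V) : Prop :=
  IsDominating G S ∧
    ∀ u ∉ S, ∃ v ∈ S, G.Adj v u ∧ IsDominating G ((S \ {v}) ∪ {u})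

/-- Degree of a vertex. -/
noncomputable def deg {V : Type*} (G : SimpleGraph V) (v : V) : ℕ :=
  (G.neighborSet v).ncard

/-- Minimum degree. -/
noncomputable def minDeg {V : Type*} (G : SimpleGraph V) : ℕ :=
  sInf (Set.range (deg G))

/-- Maximum degree. -/
noncomputable def maxDeg {V : Type*} (G : SimpleGraph V) : ℕ :=
  sSup (Set.range (deg G))

/-- `π` is a secure coalition partition of `G`. -/
def IsSecPartition {V : Type*} (G : SimpleGraph V) (π : Finset (Set V)) : Prop :=
  Setoid.IsPartition (↑π : Set (Set V)) ∧
    ∀ A ∈ π,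
      (∃ v, A = {v} ∧ deg G v = Nat.card V - 1 ∧ IsSecureDominating G A) ∨
      (¬ IsSecureDominating G A ∧
        ∃ B ∈ π, B ≠ A ∧ IsSecureDominating G (A ∪ B))

/-- The secure coalition number of `G`. -/
noncomputable def SEC {V : Type*} (G : SimpleGraph V) : ℕ :=
  sSup {k | ∃ π : Finset (Set V), IsSecPartition G π ∧ π.card = k}

/-- Two disjoint sets form a secure coalition. -/
def FormsSecCoalition {V : Type*} (G : SimpleGraph V) (A B : Set V) : Prop :=
  Disjoint A B ∧ ¬ IsSecureDominating G A ∧ ¬ IsSecureDominating G B ∧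
    IsSecureDominating G (A ∪ B)

/-- The domination number of `G`. -/
noncomputable def gammaDom {V : Type*} (G : SimpleGraph V) : ℕ :=
  sInf {k | ∃ D : Set V, IsDominating G D ∧ D.ncard = k}

/-- The secure domination number of `G`. -/
noncomputable def secDomNum {V : Type*} (G : SimpleGraph V) : ℕ :=
  sInf {k | ∃ S : Set V, IsSecureDominating G S ∧ S.ncard = k}

/-- `π` is a coalition partition (w.r.t. domination) of `G`. -/
def IsCoalitionPartition {V : Type*} (G : SimpleGraph V) (π : Finset (Set V)) : Prop :=
  Setoid.IsPartition (↑π : Set (Set V)) ∧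
    ∀ A ∈ π,
      (∃ v, A = {v} ∧ IsDominating G A) ∨
      (¬ IsDominating G A ∧ ∃ B ∈ π, B ≠ A ∧ IsDominating G (A ∪ B))

/-- The coalition number of `G`. -/
noncomputable def CNum {V : Type*} (G : SimpleGraph V) : ℕ :=
  sSup {k | ∃ π : Finset (Set V), IsCoalitionPartition G π ∧ π.card = k}

/-- The secure coalition graph of `G` w.r.t. a partition `π`. -/
def SCG {V : Type*} (G : SimpleGraph V) (π : Finset (Set V)) :
    SimpleGraph {A : Set V // A ∈ π} where
  Adj A B := FormsSecCoalition G A.1 B.1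
  symm := by
    constructor
    rintro A B ⟨hd, h1, h2, h3⟩
    exact ⟨hd.symm, h2, h1, by rwa [Set.union_comm]⟩
  loopless := by
    constructor
    rintro A ⟨hd, h1, h2, h3⟩
    exact h1 (by simpa using h3)

variable {V : Type*} (G : SimpleGraph V)

theorem not_isDominating_of_isolated {A : Set V} {w : V} (hw : ∀ u, ¬ G.Adj u w)
    (hwA : w ∉ A) : ¬ IsDominating G A := fun hA => by
  obtain ⟨u, -, hu⟩ := hA w hwA
  exact hw u hu

theorem exists_adj_notMem_of_card_le_deg {B : Finset V} {w : V} (hwB : w ∈ B)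
    (hB : B.card ≤ deg G w) : ∃ z ∉ B, G.Adj z w := by
  classical
  by_contra! h
  have hsub : G.neighborSet w ⊆ ↑(B.erase w) := fun z hz =>
    Finset.mem_erase.2 ⟨G.ne_of_adj hz |>.symm, by_contra fun hzB => h z hzB hz.symm⟩
  have : deg G w ≤ (B.erase w).card := by
    rw [deg, ← Set.ncard_coe_finset]
    exact Set.ncard_le_ncard hsub (Finset.finite_toSet _)
  have := Finset.card_erase_lt_of_mem hwB
  omega

theorem isDominating_compl_of_card_le_deg {B : Finset V} (hB : ∀ b ∈ B, B.card ≤ deg G b) :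
    IsDominating G (↑B)ᶜ := by
  intro b hb
  rw [Set.notMem_compl_iff, Finset.mem_coe] at hb
  obtain ⟨z, hz, hzb⟩ := exists_adj_notMem_of_card_le_deg G hb (hB b hb)
  exact ⟨z, hz, hzb⟩

theorem isSecureDominating_compl {d : ℕ} (hdeg : ∀ w, (∃ u, G.Adj u w) → d ≤ deg G w)
    {B : Finset V} (hB : ∀ b ∈ B, ∃ u, G.Adj u b) (hcard : B.card ≤ d) :
    IsSecureDominating G (↑B)ᶜ := by
  classical
  have hdom : ∀ B : Finset V, (∀ b ∈ B, ∃ u, G.Adj u b) → B.card ≤ d →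
      IsDominating G (↑B)ᶜ := fun B hB hcard =>
    isDominating_compl_of_card_le_deg G fun b hb => hcard.trans (hdeg b (hB b hb))
  refine ⟨hdom B hB hcard, fun b hb => ?_⟩
  rw [Set.notMem_compl_iff, Finset.mem_coe] at hb
  obtain ⟨x, hxB, hxb⟩ :=
    exists_adj_notMem_of_card_le_deg G hb (hcard.trans (hdeg b (hB b hb)))
  have hswap : ((↑B)ᶜ \ {x}) ∪ {b} = (↑(insert x (B.erase b)) : Set V)ᶜ := by
    ext z
    by_cases hzb : z = b <;> by_cases hzx : z = x <;> simp_all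
  refine ⟨x, hxB, hxb, hswap ▸ hdom _ ?_ ?_⟩
  · intro y hy
    rcases Finset.mem_insert.1 hy with rfl | hy
    · exact ⟨b, hxb.symm⟩
    · exact hB y (Finset.mem_of_mem_erase hy)
  · calc (insert x (B.erase b)).card ≤ (B.erase b).card + 1 := Finset.card_insert_le _ _
      _ = B.card := Finset.card_erase_add_one hb
      _ ≤ d := hcard

theorem deg_induce_of_neighborSet_subset {s : Set V} {w : V} (hw : w ∈ s)
    (hs : G.neighborSet w ⊆ s) : deg (G.induce s) ⟨w, hw⟩ = deg G w := by
  have himage : Subtype.val '' (G.induce s).neighborSet ⟨w, hw⟩ = G.neighborSet w := by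
    ext x
    constructor
    · rintro ⟨y, hy, rfl⟩
      exact hy
    · exact fun hx => ⟨⟨x, hs hx⟩, hx, rfl⟩
  rw [deg, deg, ← himage, Set.ncard_image_of_injective _ Subtype.val_injective]

variable {G}

theorem minDeg_induce_le_deg {s : Set V} (hs : ∀ w ∈ s, G.neighborSet w ⊆ s) {w : V}
    (hw : w ∈ s) : minDeg (G.induce s) ≤ deg G w :=
  deg_induce_of_neighborSet_subset G hw (hs w hw) ▸ Nat.sInf_le (Set.mem_range_self _)

theorem exists_deg_eq_minDeg_induce {s : Set V} (hs : ∀ w ∈ s, G.neighborSet w ⊆ s)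
    (hne : s.Nonempty) : ∃ v ∈ s, deg G v = minDeg (G.induce s) := by
  obtain ⟨w, hw⟩ := hne
  obtain ⟨⟨v, hv⟩, hvmin⟩ :=
    Nat.sInf_mem ⟨_, Set.mem_range_self (f := deg (G.induce s)) ⟨w, hw⟩⟩
  exact ⟨v, hv, deg_induce_of_neighborSet_subset G hv (hs v hv) ▸ hvmin⟩

theorem card_le_SEC [Finite V] {π : Finset (Set V)} (hπ : IsSecPartition G π) :
    π.card ≤ SEC G := by
  refine le_csSup ⟨Nat.card (Set V), ?_⟩ ⟨π, hπ, rfl⟩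
  rintro k ⟨π', -, rfl⟩
  rw [← Set.ncard_coe_finset]
  exact Set.ncard_le_card _

section SingletonPartition

variable [DecidableEq (Set V)]

def singletonPartition (P : Finset V) : Finset (Set V) :=
  insert (↑P)ᶜ (P.image ({·}))

theorem mem_singletonPartition {P : Finset V} {A : Set V} :
    A ∈ singletonPartition P ↔ A = (↑P)ᶜ ∨ ∃ p ∈ P, {p} = A := by
  rw [singletonPartition, Finset.mem_insert, Finset.mem_image]

theorem compl_notMem_image_singleton (P : Finset V) :
    (↑P : Set V)ᶜ ∉ P.image ({·}) := by
  rw [Finset.mem_image]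
  rintro ⟨p, hp, hpP⟩
  exact (hpP ▸ Set.mem_singleton p : p ∈ (↑P : Set V)ᶜ) hp

theorem card_singletonPartition (P : Finset V) : (singletonPartition P).card = P.card + 1 := by
  rw [singletonPartition, Finset.card_insert_of_notMem (compl_notMem_image_singleton P),
    Finset.card_image_of_injective _ Set.singleton_injective]

theorem isPartition_singletonPartition {P : Finset V} (hP : (↑P : Set V)ᶜ.Nonempty) :
    Setoid.IsPartition (↑(singletonPartition P) : Set (Set V)) := by
  refine ⟨fun hempty => ?_, fun a => ?_⟩
  · rcases mem_singletonPartition.1 hempty with h | ⟨p, -, hp⟩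
    · exact hP.ne_empty h.symm
    · exact Set.singleton_ne_empty p hp
  by_cases ha : a ∈ P
  · refine ⟨{a}, ⟨mem_singletonPartition.2 (.inr ⟨a, ha, rfl⟩), rfl⟩, ?_⟩
    rintro A ⟨hA, haA⟩
    rcases mem_singletonPartition.1 hA with rfl | ⟨p, -, rfl⟩
    · exact absurd ha haA
    · rw [Set.mem_singleton_iff.1 haA]
  · refine ⟨(↑P)ᶜ, ⟨mem_singletonPartition.2 (.inl rfl), ha⟩, ?_⟩
    rintro A ⟨hA, haA⟩
    rcases mem_singletonPartition.1 hA with rfl | ⟨p, hp, rfl⟩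
    · rfl
    · exact absurd (Set.mem_singleton_iff.1 haA ▸ hp) ha

theorem isSecPartition_singletonPartition {d : ℕ}
    (hdeg : ∀ w, (∃ u, G.Adj u w) → d ≤ deg G w) {P : Finset V}
    (hP : ∀ p ∈ P, ∃ u, G.Adj u p) (hcard : P.card ≤ d + 1) {v : V} (hv : v ∈ P)
    (hvP : G.neighborSet v ⊆ P) {w : V} (hw : ∀ u, ¬ G.Adj u w) :
    IsSecPartition G (singletonPartition P) := by
  have hwP : w ∉ P := fun hwP => by
    obtain ⟨u, hu⟩ := hP w hwP
    exact hw u hu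
  have hcompl : ¬ IsSecureDominating G (↑P)ᶜ := fun h => by
    obtain ⟨u, hu, huv⟩ := h.1 v (Set.notMem_compl_iff.2 hv)
    exact hu (hvP huv.symm)
  have hsingleton : ∀ p ∈ P, ¬ IsSecureDominating G {p} := fun p hp h =>
    not_isDominating_of_isolated G hw (fun hwp => hwP (Set.mem_singleton_iff.1 hwp ▸ hp)) h.1
  have hunion : ∀ p ∈ P, IsSecureDominating G ({p} ∪ (↑P)ᶜ) := by
    intro p hp
    classical
    have hswap : {p} ∪ (↑P : Set V)ᶜ = (↑(P.erase p))ᶜ := by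
      ext z
      by_cases hzp : z = p <;> simp_all
    rw [hswap]
    refine isSecureDominating_compl G hdeg (fun b hb => hP b (Finset.mem_of_mem_erase hb)) ?_
    have := Finset.card_erase_add_one hp
    omega
  have hcompl_mem : (↑P : Set V)ᶜ ∈ singletonPartition P := mem_singletonPartition.2 (.inl rfl)
  refine ⟨isPartition_singletonPartition ⟨w, hwP⟩, fun A hA => .inr ?_⟩
  rcases mem_singletonPartition.1 hA with rfl | ⟨p, hp, rfl⟩
  · refine ⟨hcompl, {v}, mem_singletonPartition.2 (.inr ⟨v, hv, rfl⟩), ?_, ?_⟩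
    · exact fun h => (h ▸ Set.mem_singleton v : v ∈ (↑P : Set V)ᶜ) hv
    · exact Set.union_comm _ _ ▸ hunion v hv
  · refine ⟨hsingleton p hp, (↑P)ᶜ, hcompl_mem, ?_, hunion p hp⟩
    exact fun h => (h ▸ Set.mem_singleton p : p ∈ (↑P : Set V)ᶜ) hp

end SingletonPartition

end SecCoal

open SecCoal

theorem stmt19_general {V : Type*} [Fintype V] (G : SimpleGraph V)
    (hne : G ≠ ⊥)
    (hI : {v : V | ∀ u, ¬ G.Adj u v}.Nonempty) :
    minDeg (G.induce {v : V | ∀ u, ¬ G.Adj u v}ᶜ) + 2 ≤ SEC G := by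
  classical
  set s : Set V := {v : V | ∀ u, ¬ G.Adj u v}ᶜ
  have hmem_s : ∀ w, w ∈ s ↔ ∃ u, G.Adj u w := fun w => by simp [s]
  have hs : ∀ w ∈ s, G.neighborSet w ⊆ s := fun w _ u hu => (hmem_s u).2 ⟨w, hu⟩
  obtain ⟨a, b, hab⟩ := SimpleGraph.ne_bot_iff_exists_adj.1 hne
  obtain ⟨v, hv, hvdeg⟩ := exists_deg_eq_minDeg_induce hs ⟨b, (hmem_s b).2 ⟨a, hab⟩⟩
  set P := insert v (G.neighborSet v).toFinset
  have hPcard : P.card = minDeg (G.induce s) + 1 := by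
    rw [Finset.card_insert_of_notMem (by simp), ← Set.ncard_eq_toFinset_card', ← hvdeg, deg]
  have hP : ∀ p ∈ P, ∃ u, G.Adj u p := by
    intro p hp
    rcases Finset.mem_insert.1 hp with rfl | hp
    · exact (hmem_s p).1 hv
    · exact ⟨v, Set.mem_toFinset.1 hp⟩
  obtain ⟨w, hw⟩ := hI
  calc minDeg (G.induce s) + 2 = (singletonPartition P).card := by
        rw [card_singletonPartition, hPcard]
    _ ≤ SEC G := card_le_SEC <| isSecPartition_singletonPartition
        (fun u hu => minDeg_induce_le_deg hs ((hmem_s u).2 hu)) hP hPcard.le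
        (Finset.mem_insert_self v _) (fun u hu => by simpa [P] using Or.inr hu) hw

theorem stmt19 {V : Type*} [Fintype V] (G : SimpleGraph V)
    (hn : 2 ≤ Fintype.card V) (hne : G ≠ ⊥)
    (hI : {v : V | ∀ u, ¬ G.Adj u v}.Nonempty) :
    minDeg (G.induce {v : V | ∀ u, ¬ G.Adj u v}ᶜ) + 2 ≤ SEC G :=
  stmt19_general G hne hI
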